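/- For all a, b in (0,1) with a + b in (0,1), the determinant of the Hessian of v(a,b) = -(1/π)·sin(πa)sin(πb)/sin(π(a+b)) equals -4π²·sin(πa)²sin(πb)²/sin(π(a+b))⁴, which is strictly negative. -/

import Mathlib

/-!
Write `v x y = -(1/π) sin (π y) · r x y` with `r x y = sin (π x) / sin (π (x + y))`.
The addition formula `sin (π y) = sin (π (x + y)) cos (π x) - cos (π (x + y)) sin (π x)` gives
`∂ₓ r = π sin (π y) / sin² (π (x + y))`, hence `∂ₓ v = -(r y x)²`, and by the symmetry of `v`
also `∂_y v = -(r x y)²`. Differentiating once more, the Hessian determinant equals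
`4π² sin² (π a) sin² (π b) (cos² - 1) / sin⁶ (π (a + b))`, and `cos² - 1 = -sin²`.
-/

open Real Filter Topology

noncomputable def speed (x y : ℝ) : ℝ :=
  -(1 / π) * (sin (π * x) * sin (π * y)) / sin (π * (x + y))

noncomputable def sinRatio (x y : ℝ) : ℝ :=
  sin (π * x) / sin (π * (x + y))

lemma speed_comm (x y : ℝ) : speed x y = speed y x := by
  simp only [speed, mul_comm (sin (π * x)), add_comm x]

lemma speed_eq_mul_sinRatio (x y : ℝ) :
    speed x y = -(1 / π) * sin (π * y) * sinRatio x y := by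
  simp only [speed, sinRatio]
  ring

lemma sin_pi_mul_pos {t : ℝ} (ht : t ∈ Set.Ioo (0 : ℝ) 1) : 0 < sin (π * t) :=
  sin_pos_of_pos_of_lt_pi (mul_pos pi_pos ht.1) (by nlinarith [pi_pos, ht.2])

lemma eventually_sin_pi_mul_add_ne_zero {x y : ℝ} (h : sin (π * (x + y)) ≠ 0) :
    ∀ᶠ t in 𝓝 x, sin (π * (t + y)) ≠ 0 :=
  (show Continuous fun t => sin (π * (t + y)) by fun_prop).continuousAt.eventually_ne h

lemma hasDerivAt_sinRatio_left (y x : ℝ) (h : sin (π * (x + y)) ≠ 0) :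
    HasDerivAt (fun t => sinRatio t y) (π * sin (π * y) / sin (π * (x + y)) ^ 2) x := by
  have hnum := ((hasDerivAt_id x).const_mul π).sin
  have hden := (((hasDerivAt_id x).add_const y).const_mul π).sin
  refine (hnum.div hden h).congr_deriv ?_
  have hsub : sin (π * y) = sin (π * (x + y)) * cos (π * x) - cos (π * (x + y)) * sin (π * x) := by
    rw [← sin_sub]
    ring_nf
  simp only [id, hsub]
  ring

lemma hasDerivAt_sinRatio_right (x y : ℝ) (h : sin (π * (x + y)) ≠ 0) :
    HasDerivAt (fun t => sinRatio x t)
      (-(π * sin (π * x) * cos (π * (x + y))) / sin (π * (x + y)) ^ 2) y := by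
  have hden := (((hasDerivAt_id y).const_add x).const_mul π).sin
  refine ((hasDerivAt_const y (sin (π * x))).div hden h).congr_deriv ?_
  simp only [id]
  ring

lemma hasDerivAt_speed_left (y x : ℝ) (h : sin (π * (x + y)) ≠ 0) :
    HasDerivAt (fun t => speed t y) (-sinRatio y x ^ 2) x := by
  simp_rw [speed_eq_mul_sinRatio]
  refine ((hasDerivAt_sinRatio_left y x h).const_mul (-(1 / π) * sin (π * y))).congr_deriv ?_
  rw [sinRatio, add_comm y x]
  field_simp

lemma deriv_speed_right (x y : ℝ) (h : sin (π * (x + y)) ≠ 0) :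
    deriv (fun t => speed x t) y = -sinRatio x y ^ 2 := by
  simp_rw [speed_comm x]
  exact (hasDerivAt_speed_left x y (by rwa [add_comm])).deriv

lemma hasDerivAt_deriv_speed_left (y x : ℝ) (h : sin (π * (x + y)) ≠ 0) :
    HasDerivAt (deriv fun t => speed t y)
      (2 * π * sin (π * y) ^ 2 * cos (π * (x + y)) / sin (π * (x + y)) ^ 3) x := by
  have hderiv : deriv (fun t => speed t y) =ᶠ[𝓝 x] fun t => -sinRatio y t ^ 2 := by
    filter_upwards [eventually_sin_pi_mul_add_ne_zero h] with t ht
    exact (hasDerivAt_speed_left y t ht).deriv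
  have hsq := ((hasDerivAt_sinRatio_right y x (by rwa [add_comm])).pow 2).neg
  refine (hsq.congr_deriv ?_).congr_of_eventuallyEq hderiv
  rw [sinRatio, add_comm y x]
  norm_num
  field_simp

lemma hasDerivAt_deriv_speed_right (y x : ℝ) (h : sin (π * (x + y)) ≠ 0) :
    HasDerivAt (fun s => deriv (fun t => speed s t) y)
      (-(2 * π * sin (π * x) * sin (π * y)) / sin (π * (x + y)) ^ 3) x := by
  have hderiv : (fun s => deriv (fun t => speed s t) y) =ᶠ[𝓝 x] fun s => -sinRatio s y ^ 2 := by
    filter_upwards [eventually_sin_pi_mul_add_ne_zero h] with s hs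
    exact deriv_speed_right s y hs
  have hsq := ((hasDerivAt_sinRatio_left y x h).pow 2).neg
  refine (hsq.congr_deriv ?_).congr_of_eventuallyEq hderiv
  rw [sinRatio]
  norm_num
  field_simp

theorem hessian_determinant_negative
    (a b : ℝ) (ha : a ∈ Set.Ioo (0:ℝ) 1) (hb : b ∈ Set.Ioo (0:ℝ) 1)
    (hab : a + b ∈ Set.Ioo (0:ℝ) 1) :
    let v : ℝ → ℝ → ℝ := fun x y =>
      -(1 / Real.pi) * (Real.sin (Real.pi * x) * Real.sin (Real.pi * y)) /
        Real.sin (Real.pi * (x + y));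
    let vaa := deriv (deriv (fun x => v x b)) a;
    let vbb := deriv (deriv (fun y => v a y)) b;
    let vab := deriv (fun x => deriv (fun y => v x y) b) a;
    vaa * vbb - vab ^ 2 =
      -(4 * Real.pi ^ 2) * (Real.sin (Real.pi * a) ^ 2 * Real.sin (Real.pi * b) ^ 2) /
        Real.sin (Real.pi * (a + b)) ^ 4 ∧
    vaa * vbb - vab ^ 2 < 0 := by
  intro v vaa vbb vab
  have hs : sin (π * (a + b)) ≠ 0 := (sin_pi_mul_pos hab).ne'
  have hvaa : vaa = _ := (hasDerivAt_deriv_speed_left b a hs).deriv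
  have hvbb : vbb = 2 * π * sin (π * a) ^ 2 * cos (π * (a + b)) / sin (π * (a + b)) ^ 3 := by
    have hba := (hasDerivAt_deriv_speed_left a b (by rwa [add_comm])).deriv
    rw [add_comm b a] at hba
    show deriv (deriv fun y => speed a y) b = _
    simp_rw [speed_comm a]
    exact hba
  have hvab : vab = _ := (hasDerivAt_deriv_speed_right b a hs).deriv
  have hdet : vaa * vbb - vab ^ 2 =
      -(4 * π ^ 2) * (sin (π * a) ^ 2 * sin (π * b) ^ 2) / sin (π * (a + b)) ^ 4 := by
    rw [hvaa, hvbb, hvab]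
    field_simp
    linear_combination 4 * sin (π * a) ^ 2 * sin (π * b) ^ 2 * sin_sq_add_cos_sq (π * (a + b))
  refine ⟨hdet, ?_⟩
  have hsa := sin_pi_mul_pos ha
  have hsb := sin_pi_mul_pos hb
  rw [hdet, neg_mul, neg_div, neg_lt_zero]
  positivity
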